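/- For any two boundary vertices b1, b2 ∈ B, the distance in G is at most the distance in the boundary graph: dist_G(b1,b2) ≤ dist_BG(b1,b2). Equivalently, every walk in BG from b1 to b2 has length at least dist_G(b1,b2). -/

import Mathlib

open scoped ENNReal

namespace SPQ

variable {V : Type*} {ι : Type*}

/-- The length of a walk: the sum of the weights `w` over its consecutive edges. -/
noncomputable def wlen (w : V → V → ℝ≥0∞) {G : SimpleGraph V} {u v : V} (p : G.Walk u v) : ℝ≥0∞ :=
  (p.darts.map fun d => w d.toProd.1 d.toProd.2).sum

/-- The shortest-path distance: infimum of lengths of all walks (⊤ if none exists). -/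
noncomputable def gdist (G : SimpleGraph V) (w : V → V → ℝ≥0∞) (u v : V) : ℝ≥0∞ :=
  ⨅ p : G.Walk u v, wlen w p

/-- The component `C_i`: the subgraph of `G` induced on `P ⁻¹ {i}`
(as a graph on `V`: edges of `G` with both endpoints mapped to `i` by `P`). -/
def comp (G : SimpleGraph V) (P : V → ι) (i : ι) : SimpleGraph V where
  Adj u v := G.Adj u v ∧ P u = i ∧ P v = i
  symm := ⟨fun _ _ h => ⟨h.1.symm, h.2.2, h.2.1⟩⟩
  loopless := ⟨fun u h => G.loopless.1 u h.1⟩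

/-- The boundary `B(C_i)`: vertices of component `i` having a `G`-neighbor
in a different component. -/
def bdry (G : SimpleGraph V) (P : V → ι) (i : ι) : Set V :=
  {v | P v = i ∧ ∃ u, G.Adj v u ∧ P u ≠ i}

/-- The set `B` of all boundary vertices. -/
def bdryAll (G : SimpleGraph V) (P : V → ι) : Set V :=
  ⋃ i, bdry G P i

/-- The boundary graph `BG`: distinct boundary vertices `b1, b2` are adjacent
iff `P b1 = P b2` or `G.Adj b1 b2`. -/
def BGraph (G : SimpleGraph V) (P : V → ι) : SimpleGraph V where
  Adj b1 b2 := b1 ≠ b2 ∧ b1 ∈ bdryAll G P ∧ b2 ∈ bdryAll G P ∧ (P b1 = P b2 ∨ G.Adj b1 b2)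
  symm := by
    constructor
    intro u v h
    refine ⟨h.1.symm, h.2.2.1, h.2.1, ?_⟩
    rcases h.2.2.2 with h' | h'
    · exact Or.inl h'.symm
    · exact Or.inr h'.symm
  loopless := ⟨fun u h => h.1 rfl⟩

open Classical in
/-- The edge weight of the boundary graph:
`wt b1 b2 = dist_{C_{P b1}}(b1, b2)` if `P b1 = P b2`, and `w b1 b2` otherwise. -/
noncomputable def wt (G : SimpleGraph V) (P : V → ι) (w : V → V → ℝ≥0∞) (b1 b2 : V) : ℝ≥0∞ :=
  if P b1 = P b2 then gdist (comp G P (P b1)) w b1 b2 else w b1 b2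

variable {G H : SimpleGraph V} {w w' : V → V → ℝ≥0∞}

@[simp]
lemma wlen_nil {u : V} : wlen w (SimpleGraph.Walk.nil : G.Walk u u) = 0 := by
  simp [wlen]

@[simp]
lemma wlen_cons {u x v : V} (h : G.Adj u x) (p : G.Walk x v) :
    wlen w (SimpleGraph.Walk.cons h p) = w u x + wlen w p := by
  simp [wlen]

lemma wlen_append {u x v : V} (p : G.Walk u x) (q : G.Walk x v) :
    wlen w (p.append q) = wlen w p + wlen w q := by
  simp [wlen, SimpleGraph.Walk.darts_append]

lemma gdist_le_wlen {u v : V} (p : G.Walk u v) : gdist G w u v ≤ wlen w p :=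
  iInf_le _ p

@[simp]
lemma gdist_self (u : V) : gdist G w u u = 0 :=
  nonpos_iff_eq_zero.mp ((gdist_le_wlen .nil).trans_eq wlen_nil)

lemma gdist_le_of_adj {u v : V} (h : G.Adj u v) : gdist G w u v ≤ w u v := by
  simpa using gdist_le_wlen (w := w) (SimpleGraph.Walk.cons h .nil)

lemma gdist_triangle (u x v : V) : gdist G w u v ≤ gdist G w u x + gdist G w x v :=
  ENNReal.le_iInf_add_iInf fun p q => (gdist_le_wlen (p.append q)).trans_eq (wlen_append p q)

/-- Replace each edge of an `H`-walk by a `G`-walk between its endpoints of length at most its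
`w'`-weight and concatenate. -/
lemma gdist_le_gdist_of_forall_adj (hH : ∀ u v, H.Adj u v → gdist G w u v ≤ w' u v) (u v : V) :
    gdist G w u v ≤ gdist H w' u v := by
  refine le_iInf fun p => ?_
  induction p with
  | nil => simp
  | @cons a b c hab p ih =>
    rw [wlen_cons]
    exact (gdist_triangle a b c).trans (add_le_add (hH a b hab) ih)

lemma gdist_anti (hle : H ≤ G) (u v : V) : gdist G w u v ≤ gdist H w u v :=
  gdist_le_gdist_of_forall_adj (fun _ _ h => gdist_le_of_adj (hle h)) u v

lemma comp_le (P : V → ι) (i : ι) : comp G P i ≤ G :=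
  fun _ _ h => h.1

lemma gdist_le_wt (P : V → ι) {u x : V} (h : (BGraph G P).Adj u x) :
    gdist G w u x ≤ wt G P w u x := by
  classical
  unfold wt
  split_ifs with hP
  · exact gdist_anti (comp_le P _) u x
  · exact gdist_le_of_adj (h.2.2.2.resolve_left hP)

theorem stmt1_general {V : Type*} {ι : Type*}
    (G : SimpleGraph V) (w : V → V → ℝ≥0∞)
    (P : V → ι) (b1 b2 : V) :
    gdist G w b1 b2 ≤ gdist (BGraph G P) (wt G P w) b1 b2 :=
  gdist_le_gdist_of_forall_adj (fun _ _ h => gdist_le_wt P h) b1 b2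

/-- For any two boundary vertices `b1, b2 ∈ B`, the distance in `G` is at
most the distance in the boundary graph: `dist_G(b1,b2) ≤ dist_BG(b1,b2)`. -/
theorem stmt1 {V : Type*} {ι : Type*} [Fintype V] [Fintype ι]
    (G : SimpleGraph V) (w : V → V → ℝ≥0∞)
    (hsymm : ∀ u v, w u v = w v u) (hfin : ∀ u v, G.Adj u v → w u v < ⊤)
    (P : V → ι) (b1 b2 : V)
    (hb1 : b1 ∈ bdryAll G P) (hb2 : b2 ∈ bdryAll G P) :
    gdist G w b1 b2 ≤ gdist (BGraph G P) (wt G P w) b1 b2 :=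
  stmt1_general G w P b1 b2

end SPQ
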